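/- Let G be an edge-minimal edge-colored graph with Δ^{mon}(G) ≥ 2, and let v be a vertex with d^{mon}(v) = Δ^{mon}(G). If B(v) = 0, then: (a) N_!(v) = N(v) \ N₁(v); (b) d^{mon}(u) = Δ^{mon}(G) for every u ∈ N_!(v); and (c) if moreover B₁(v) = 0, then every edge xy of G with x ∈ N₁(v) and y ∈ N_!(v) is a rainbow triangle edge of v, i.e., the triangle v x y is rainbow. -/
import Mathlib


/-- The triangle on vertices `u`, `v`, `w` exists in `G` and is rainbow under the
edge-coloring `c`, i.e. its three edges receive pairwise distinct colors. -/
def IsRainbowTri {V : Type*} (G : SimpleGraph V) (c : Sym2 V → ℕ) (u v w : V) : Prop :=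
  G.Adj u v ∧ G.Adj u w ∧ G.Adj v w ∧
    c s(u, v) ≠ c s(u, w) ∧ c s(u, v) ≠ c s(v, w) ∧ c s(u, w) ≠ c s(v, w)

/-- The color degree of `v`: the number of distinct colors on edges incident with `v`. -/
noncomputable def colorDeg {V : Type*} (G : SimpleGraph V) (c : Sym2 V → ℕ) (v : V) : ℕ :=
  Set.ncard {β : ℕ | ∃ u, G.Adj v u ∧ c s(v, u) = β}


/-- `rtE G c v x` : the number of rainbow triangles of `G` containing the edge `vx`. -/
noncomputable def rtE {V : Type*} (G : SimpleGraph V) (c : Sym2 V → ℕ) (v x : V) : ℕ :=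
  Set.ncard {w : V | IsRainbowTri G c v x w}

/-- `NColor G c v β` : the `β`-neighborhood of `v`, i.e. the neighbors `u` of `v`
with `c(vu) = β`. -/
def NColor {V : Type*} [Fintype V] [DecidableEq V] (G : SimpleGraph V)
    [DecidableRel G.Adj] (c : Sym2 V → ℕ) (v : V) (β : ℕ) : Finset V :=
  (G.neighborFinset v).filter fun u => c s(v, u) = β

/-- `dColor G c v β = d_β(v)`, the number of neighbors of `v` joined to `v`
by an edge of color `β`. -/
def dColor {V : Type*} [Fintype V] [DecidableEq V] (G : SimpleGraph V)
    [DecidableRel G.Adj] (c : Sym2 V → ℕ) (v : V) (β : ℕ) : ℕ :=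
  (NColor G c v β).card

/-- `dColorIn G c y β X = d_β(y, X)`, the number of neighbors of `y` in `X` joined
to `y` by an edge of color `β`. -/
def dColorIn {V : Type*} [Fintype V] [DecidableEq V] (G : SimpleGraph V)
    [DecidableRel G.Adj] (c : Sym2 V → ℕ) (y : V) (β : ℕ) (X : Finset V) : ℕ :=
  (X.filter fun u => G.Adj y u ∧ c s(y, u) = β).card

/-- `NBangF G c v = N_!(v)`, the set of neighbors `y` of `v` such that the color
`c(vy)` appears exactly once at `v`. -/
def NBangF {V : Type*} [Fintype V] [DecidableEq V] (G : SimpleGraph V)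
    [DecidableRel G.Adj] (c : Sym2 V → ℕ) (v : V) : Finset V :=
  (G.neighborFinset v).filter fun y => dColor G c v (c s(v, y)) = 1

/-- `G` is edge-minimal: deleting any edge decreases the color degree of one of
its endpoints. -/
def EdgeMinimal {V : Type*} (G : SimpleGraph V) (c : Sym2 V → ℕ) : Prop :=
  ∀ u w : V, G.Adj u w →
    colorDeg (G.deleteEdges {s(u, w)}) c u < colorDeg G c u ∨
    colorDeg (G.deleteEdges {s(u, w)}) c w < colorDeg G c w

/-- `dMon G c v = d^{mon}(v)`, the monochromatic degree of `v`: the maximum number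
of edges at `v` sharing one color. -/
noncomputable def dMon {V : Type*} [Fintype V] [DecidableEq V] (G : SimpleGraph V)
    [DecidableRel G.Adj] (c : Sym2 V → ℕ) (v : V) : ℕ :=
  sSup (Set.range fun β => dColor G c v β)

/-- `DeltaMon G c = Δ^{mon}(G)`, the maximum monochromatic degree of `G`. -/
noncomputable def DeltaMon {V : Type*} [Fintype V] [DecidableEq V] (G : SimpleGraph V)
    [DecidableRel G.Adj] (c : Sym2 V → ℕ) : ℕ :=
  sSup (Set.range fun v => dMon G c v)

section Helpers
variable {V : Type*} [Fintype V] [DecidableEq V] (G : SimpleGraph V) [DecidableRel G.Adj]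
    (c : Sym2 V → ℕ)

lemma dColor_le_dMon (v : V) (β : ℕ) : dColor G c v β ≤ dMon G c v := by
  refine le_csSup ⟨G.degree v, ?_⟩ (Set.mem_range_self β)
  rintro x ⟨γ, rfl⟩; exact Finset.card_filter_le _ _

lemma dMon_le_DeltaMon (v : V) : dMon G c v ≤ DeltaMon G c := by
  refine le_csSup ⟨Fintype.card V, ?_⟩ (Set.mem_range_self v)
  rintro x ⟨u, rfl⟩
  refine csSup_le (Set.range_nonempty _) ?_
  rintro x ⟨γ, rfl⟩
  exact (Finset.card_filter_le _ _).trans (Finset.card_le_univ _)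

lemma degree_eq_sum_dColor (v : V) :
    G.degree v = ∑ γ ∈ (G.neighborFinset v).image (fun u => c s(v, u)), dColor G c v γ :=
  Finset.card_eq_sum_card_image _ _

lemma mem_image_of_dColor_pos {v : V} {γ : ℕ} (h : 0 < dColor G c v γ) :
    γ ∈ (G.neighborFinset v).image (fun u => c s(v, u)) := by
  obtain ⟨u, hu⟩ := Finset.card_pos.mp h
  rw [NColor, Finset.mem_filter] at hu
  exact Finset.mem_image.mpr ⟨u, hu.1, hu.2⟩

lemma dColor_pos_of_mem_image {v : V} {γ : ℕ}
    (h : γ ∈ (G.neighborFinset v).image (fun u => c s(v, u))) : 0 < dColor G c v γ := by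
  obtain ⟨u, hu, rfl⟩ := Finset.mem_image.mp h
  exact Finset.card_pos.mpr ⟨u, Finset.mem_filter.mpr ⟨hu, rfl⟩⟩

/-- sum over `N_!(v)` of a function of the color equals sum over multiplicity-1 colors. -/
lemma sum_nbang {M : Type*} [AddCommMonoid M] (v : V) (f : ℕ → M) :
    ∑ y ∈ NBangF G c v, f (c s(v, y)) =
      ∑ γ ∈ ((G.neighborFinset v).image (fun u => c s(v, u))).filter
          (fun γ => dColor G c v γ = 1), f γ := by
  refine Finset.sum_bij (fun y _ => c s(v, y)) ?_ ?_ ?_ (fun _ _ => rfl)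
  · intro y hy
    rw [NBangF, Finset.mem_filter] at hy
    exact Finset.mem_filter.mpr ⟨Finset.mem_image.mpr ⟨y, hy.1, rfl⟩, hy.2⟩
  · intro y₁ h₁ y₂ h₂ hc
    rw [NBangF, Finset.mem_filter] at h₁ h₂
    have hm₁ : y₁ ∈ NColor G c v (c s(v, y₁)) := Finset.mem_filter.mpr ⟨h₁.1, rfl⟩
    have hm₂ : y₂ ∈ NColor G c v (c s(v, y₁)) := Finset.mem_filter.mpr ⟨h₂.1, hc.symm⟩
    exact Finset.card_le_one.mp h₁.2.le y₁ hm₁ y₂ hm₂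
  · intro γ hγ
    rw [Finset.mem_filter] at hγ
    obtain ⟨y, hy⟩ := Finset.card_pos.mp (hγ.2 ▸ Nat.one_pos)
    rw [NColor, Finset.mem_filter] at hy
    refine ⟨y, Finset.mem_filter.mpr ⟨hy.1, ?_⟩, hy.2⟩
    rw [hy.2]; exact hγ.2

/-- key counting: `d_{c(vy)}(y, N(v)) + 1 ≤ d_{c(vy)}(y)`. -/
lemma dColorIn_succ_le (v y : V) (hy : G.Adj v y) :
    dColorIn G c y (c s(v, y)) (G.neighborFinset v) + 1 ≤ dColor G c y (c s(v, y)) := by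
  set γ := c s(v, y)
  set A := (G.neighborFinset v).filter fun u => G.Adj y u ∧ c s(y, u) = γ with hA
  have hvA : v ∉ A := fun h => G.irrefl (G.mem_neighborFinset v v |>.mp (Finset.filter_subset _ _ h))
  have hsub : insert v A ⊆ NColor G c y γ := by
    intro u hu
    rcases Finset.mem_insert.mp hu with rfl | hu
    · exact Finset.mem_filter.mpr ⟨(G.mem_neighborFinset y u).mpr hy.symm, by
        rw [Sym2.eq_swap]⟩
    · rw [hA, Finset.mem_filter] at hu
      exact Finset.mem_filter.mpr ⟨(G.mem_neighborFinset y u).mpr hu.2.1, hu.2.2⟩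
  calc dColorIn G c y γ (G.neighborFinset v) + 1 = (insert v A).card := by
        rw [Finset.card_insert_of_notMem hvA]; rfl
    _ ≤ _ := Finset.card_le_card hsub

/-- deleting an edge whose color is duplicated at `a`, and when every other color
survives, doesn't change the color set at `a`. -/
lemma colorDeg_delete_eq {a b : V} (hab : G.Adj a b) (x' : V) (hx' : G.Adj a x')
    (hne : x' ≠ b) (hc : c s(a, x') = c s(a, b)) :
    ¬ colorDeg (G.deleteEdges {s(a, b)}) c a < colorDeg G c a := by
  have hset : {β : ℕ | ∃ u, (G.deleteEdges {s(a, b)}).Adj a u ∧ c s(a, u) = β} =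
      {β : ℕ | ∃ u, G.Adj a u ∧ c s(a, u) = β} := by
    ext β
    constructor
    · rintro ⟨u, hu, rfl⟩
      exact ⟨u, (SimpleGraph.deleteEdges_adj.mp hu).1, rfl⟩
    · rintro ⟨u, hu, rfl⟩
      by_cases hub : u = b
      · subst hub
        refine ⟨x', SimpleGraph.deleteEdges_adj.mpr ⟨hx', ?_⟩, hc⟩
        simp only [Set.mem_singleton_iff, Sym2.eq_iff]
        rintro (⟨-, h⟩ | ⟨h, -⟩)
        · exact hne h
        · exact hab.ne h
      · refine ⟨u, SimpleGraph.deleteEdges_adj.mpr ⟨hu, ?_⟩, rfl⟩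
        simp only [Set.mem_singleton_iff, Sym2.eq_iff]
        rintro (⟨-, h⟩ | ⟨h, -⟩)
        · exact hub h
        · exact hab.ne h
  rw [colorDeg, colorDeg, hset]
  exact lt_irrefl _

end Helpers

/-- Let `G` be edge-minimal with `Δ^{mon}(G) ≥ 2`, `v` a vertex with
`d^{mon}(v) = Δ^{mon}(G)`, and `β₁` a color of maximum multiplicity at `v`
(so `N₁(v) = N_{β₁}(v)`). If `B(v) = 0` then:
(a) `N_!(v) = N(v) \ N₁(v)`;
(b) `d^{mon}(u) = Δ^{mon}(G)` for all `u ∈ N_!(v)`;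
(c) if moreover `B₁(v) = 0`, then every edge `xy` with `x ∈ N₁(v)`, `y ∈ N_!(v)`
is a rainbow triangle edge of `v`. Here `γ` runs over all colors appearing at `v`,
`B(v) = d(v) Σ_γ (d_γ-1) - Σ_γ d_γ(d_γ-1) - Σ_{y ∈ N_!(v)} d_{c(vy)}(y, N(v))` and
`B₁(v) = d_{β₁} Σ_γ (d_γ-1) - d_{β₁}(d_{β₁}-1) - Σ_{y ∈ N_!(v)} d_{c(vy)}(y, N₁(v))`. -/


theorem statement10 {V : Type*} [Fintype V] [DecidableEq V]
    (G : SimpleGraph V) [DecidableRel G.Adj] (c : Sym2 V → ℕ)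
    (hmin : EdgeMinimal G c) (hΔ : 2 ≤ DeltaMon G c)
    (v : V) (hv : dMon G c v = DeltaMon G c)
    (β₁ : ℕ) (hβ₁ : dColor G c v β₁ = dMon G c v)
    (hB : (G.degree v : ℤ) *
            (∑ γ ∈ (G.neighborFinset v).image (fun u => c s(v, u)),
              ((dColor G c v γ : ℤ) - 1))
          - (∑ γ ∈ (G.neighborFinset v).image (fun u => c s(v, u)),
              (dColor G c v γ : ℤ) * ((dColor G c v γ : ℤ) - 1))
          - (∑ y ∈ NBangF G c v,
              (dColorIn G c y (c s(v, y)) (G.neighborFinset v) : ℤ)) = 0) :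
    NBangF G c v = G.neighborFinset v \ NColor G c v β₁ ∧
    (∀ u ∈ NBangF G c v, dMon G c u = DeltaMon G c) ∧
    ((dColor G c v β₁ : ℤ) *
          (∑ γ ∈ (G.neighborFinset v).image (fun u => c s(v, u)),
            ((dColor G c v γ : ℤ) - 1))
        - (dColor G c v β₁ : ℤ) * ((dColor G c v β₁ : ℤ) - 1)
        - (∑ y ∈ NBangF G c v,
            (dColorIn G c y (c s(v, y)) (NColor G c v β₁) : ℤ)) = 0 →
      ∀ x ∈ NColor G c v β₁, ∀ y ∈ NBangF G c v, G.Adj x y →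
        IsRainbowTri G c v x y) := by
  classical
  set k := DeltaMon G c with hkdef
  have hk : dColor G c v β₁ = k := hβ₁.trans hv
  set T := (G.neighborFinset v).image (fun u => c s(v, u)) with hT
  set S := ∑ γ ∈ T, ((dColor G c v γ : ℤ) - 1) with hS
  have hβT : β₁ ∈ T := mem_image_of_dColor_pos G c (by omega)
  have hDpos : ∀ γ ∈ T, (1 : ℤ) ≤ (dColor G c v γ : ℤ) := fun γ hγ => by
    exact_mod_cast dColor_pos_of_mem_image G c hγ
  have hSge : ∀ γ ∈ T, ((dColor G c v γ : ℤ) - 1) ≤ S := fun γ hγ =>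
    Finset.single_le_sum (f := fun γ => (dColor G c v γ : ℤ) - 1)
      (fun γ' hγ' => by show (0:ℤ) ≤ (dColor G c v γ' : ℤ) - 1; linarith [hDpos γ' hγ']) hγ
  have hSk : (k : ℤ) - 1 ≤ S := by
    have := hSge β₁ hβT; rw [hk] at this; exact this
  have hAdjOfBang : ∀ y ∈ NBangF G c v, G.Adj v y := fun y hy =>
    (G.mem_neighborFinset v y).mp (Finset.mem_filter.mp hy).1
  have hty_le : ∀ y ∈ NBangF G c v,
      (dColorIn G c y (c s(v, y)) (G.neighborFinset v) : ℤ) ≤ (k : ℤ) - 1 := by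
    intro y hy
    have h1 := dColorIn_succ_le G c v y (hAdjOfBang y hy)
    have h2 := (dColor_le_dMon G c y (c s(v, y))).trans (dMon_le_DeltaMon G c y)
    rw [← hkdef] at h2
    push_cast
    omega
  -- decompose B into a sum of nonnegative terms
  set T1 := T.filter (fun γ => dColor G c v γ = 1) with hT1
  set T2 := T.filter (fun γ => ¬ dColor G c v γ = 1) with hT2
  have hdeg : (G.degree v : ℤ) = ∑ γ ∈ T, (dColor G c v γ : ℤ) := by
    rw [degree_eq_sum_dColor G c v]; push_cast; rfl
  have key : ∑ γ ∈ T2, ((dColor G c v γ : ℤ) * (S - ((dColor G c v γ : ℤ) - 1)))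
      + ∑ y ∈ NBangF G c v,
          (S - (dColorIn G c y (c s(v, y)) (G.neighborFinset v) : ℤ)) = 0 := by
    have e1 : ∑ y ∈ NBangF G c v,
        (S - (dColorIn G c y (c s(v, y)) (G.neighborFinset v) : ℤ)) =
        ∑ γ ∈ T1, S - ∑ y ∈ NBangF G c v,
          (dColorIn G c y (c s(v, y)) (G.neighborFinset v) : ℤ) := by
      rw [Finset.sum_sub_distrib]
      congr 1
      exact sum_nbang G c v (fun _ => S)
    have e2 : ∑ γ ∈ T1, S
        + ∑ γ ∈ T2, ((dColor G c v γ : ℤ) * (S - ((dColor G c v γ : ℤ) - 1)))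
        = ∑ γ ∈ T, ((dColor G c v γ : ℤ) * (S - ((dColor G c v γ : ℤ) - 1))) := by
      rw [← Finset.sum_filter_add_sum_filter_not T (fun γ => dColor G c v γ = 1)
        (fun γ => (dColor G c v γ : ℤ) * (S - ((dColor G c v γ : ℤ) - 1)))]
      congr 1
      refine Finset.sum_congr rfl fun γ hγ => ?_
      have h1 : dColor G c v γ = 1 := (Finset.mem_filter.mp hγ).2
      rw [h1]; push_cast; ring
    have e3 : ∑ γ ∈ T, ((dColor G c v γ : ℤ) * (S - ((dColor G c v γ : ℤ) - 1)))
        = (G.degree v : ℤ) * S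
          - ∑ γ ∈ T, (dColor G c v γ : ℤ) * ((dColor G c v γ : ℤ) - 1) := by
      simp only [mul_sub]
      rw [Finset.sum_sub_distrib, ← Finset.sum_mul, ← hdeg]
    linarith [hB]
  have hnn2 : ∀ γ ∈ T2, (0 : ℤ) ≤
      (dColor G c v γ : ℤ) * (S - ((dColor G c v γ : ℤ) - 1)) := by
    intro γ hγ
    have hγT : γ ∈ T := (Finset.mem_filter.mp hγ).1
    exact mul_nonneg (by linarith [hDpos γ hγT]) (by linarith [hSge γ hγT])
  have hnnY : ∀ y ∈ NBangF G c v,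
      (0 : ℤ) ≤ S - (dColorIn G c y (c s(v, y)) (G.neighborFinset v) : ℤ) := by
    intro y hy
    linarith [hty_le y hy, hSk]
  have hsum2 : ∑ γ ∈ T2, ((dColor G c v γ : ℤ) * (S - ((dColor G c v γ : ℤ) - 1))) = 0 ∧
      ∑ y ∈ NBangF G c v,
        (S - (dColorIn G c y (c s(v, y)) (G.neighborFinset v) : ℤ)) = 0 := by
    constructor <;>
      [skip; skip] <;>
      · have n1 := Finset.sum_nonneg hnn2
        have n2 := Finset.sum_nonneg hnnY
        linarith [key]
  have hzero2 : ∀ γ ∈ T2,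
      (dColor G c v γ : ℤ) * (S - ((dColor G c v γ : ℤ) - 1)) = 0 :=
    (Finset.sum_eq_zero_iff_of_nonneg hnn2).mp hsum2.1
  have hzeroY : ∀ y ∈ NBangF G c v,
      S - (dColorIn G c y (c s(v, y)) (G.neighborFinset v) : ℤ) = 0 :=
    (Finset.sum_eq_zero_iff_of_nonneg hnnY).mp hsum2.2
  have hβ₁T2 : β₁ ∈ T2 := Finset.mem_filter.mpr ⟨hβT, by omega⟩
  have hSval : S = (k : ℤ) - 1 := by
    have h := hzero2 β₁ hβ₁T2
    rw [hk] at h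
    rcases mul_eq_zero.mp h with h' | h'
    · exfalso; have : (0:ℤ) < (k:ℤ) := by exact_mod_cast Nat.lt_of_lt_of_le Nat.zero_lt_two hΔ
      omega
    · linarith
  have hone : ∀ γ ∈ T, γ ≠ β₁ → dColor G c v γ = 1 := by
    intro γ hγ hne
    by_contra h
    have hγ2 : γ ∈ T2 := Finset.mem_filter.mpr ⟨hγ, h⟩
    have hz := hzero2 γ hγ2
    have hDγ : S = (dColor G c v γ : ℤ) - 1 := by
      rcases mul_eq_zero.mp hz with h' | h'
      · exfalso; linarith [hDpos γ hγ]
      · linarith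
    have hpair : ((dColor G c v β₁ : ℤ) - 1) + ((dColor G c v γ : ℤ) - 1) ≤ S := by
      have hsub : ({β₁, γ} : Finset ℕ) ⊆ T := by
        intro a ha
        rcases Finset.mem_insert.mp ha with rfl | ha
        · exact hβT
        · rwa [Finset.mem_singleton.mp ha]
      calc ((dColor G c v β₁ : ℤ) - 1) + ((dColor G c v γ : ℤ) - 1)
          = ∑ a ∈ ({β₁, γ} : Finset ℕ), ((dColor G c v a : ℤ) - 1) :=
            (Finset.sum_pair (f := fun a => (dColor G c v a : ℤ) - 1) (Ne.symm hne)).symm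
        _ ≤ S := Finset.sum_le_sum_of_subset_of_nonneg hsub
            (fun a ha _ => by linarith [hDpos a ha])
    have hkz : (2 : ℤ) ≤ (k : ℤ) := by exact_mod_cast hΔ
    rw [hk] at hpair
    omega
  -- part (a)
  have ha : NBangF G c v = G.neighborFinset v \ NColor G c v β₁ := by
    ext y
    simp only [NBangF, NColor, Finset.mem_filter, Finset.mem_sdiff]
    constructor
    · rintro ⟨hyN, h1⟩
      refine ⟨hyN, fun hmem => ?_⟩
      rw [hmem.2] at h1
      omega
    · rintro ⟨hyN, h2⟩
      refine ⟨hyN, ?_⟩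
      have hcy : c s(v, y) ≠ β₁ := fun h => h2 ⟨hyN, h⟩
      exact hone _ (Finset.mem_image.mpr ⟨y, hyN, rfl⟩) hcy
  -- part (b)
  have hb : ∀ u ∈ NBangF G c v, dMon G c u = k := by
    intro u hu
    have h0 := hzeroY u hu
    have h1 := dColorIn_succ_le G c v u (hAdjOfBang u hu)
    have h2 := dColor_le_dMon G c u (c s(v, u))
    have h3 := dMon_le_DeltaMon G c u
    rw [← hkdef] at h3
    rw [hSval] at h0
    omega
  refine ⟨ha, hb, ?_⟩
  -- part (c)
  intro hB1 x hx y hy hxy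
  rw [hk, hSval] at hB1
  have hsum0 : ∑ y ∈ NBangF G c v, (dColorIn G c y (c s(v, y)) (NColor G c v β₁) : ℤ) = 0 := by
    linarith
  have hzY : ∀ y ∈ NBangF G c v,
      (dColorIn G c y (c s(v, y)) (NColor G c v β₁) : ℤ) = 0 :=
    (Finset.sum_eq_zero_iff_of_nonneg (fun y _ => by positivity)).mp hsum0
  have hvx : G.Adj v x := (G.mem_neighborFinset v x).mp (Finset.mem_filter.mp hx).1
  have hcx : c s(v, x) = β₁ := (Finset.mem_filter.mp hx).2
  have hvy : G.Adj v y := hAdjOfBang y hy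
  have hcy : c s(v, y) ≠ β₁ := by
    intro h
    have := ha ▸ hy
    rw [Finset.mem_sdiff] at this
    exact this.2 (Finset.mem_filter.mpr ⟨(G.mem_neighborFinset v y).mpr hvy, h⟩)
  have h3 : c s(x, y) ≠ c s(v, y) := by
    intro h
    have hz := hzY y hy
    have hcard : ((NColor G c v β₁).filter
        (fun u => G.Adj y u ∧ c s(y, u) = c s(v, y))).card = 0 := by exact_mod_cast hz
    have hxmem : x ∈ (NColor G c v β₁).filter
        (fun u => G.Adj y u ∧ c s(y, u) = c s(v, y)) :=
      Finset.mem_filter.mpr ⟨hx, hxy.symm, by rw [Sym2.eq_swap]; exact h⟩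
    rw [Finset.card_eq_zero] at hcard
    simp [hcard] at hxmem
  have h2 : c s(x, y) ≠ β₁ := by
    intro h
    rcases hmin v x hvx with hlt | hlt
    · obtain ⟨x', hx'mem, hx'ne⟩ := Finset.exists_mem_ne
        (s := NColor G c v β₁) (by rw [NColor] at *; show 1 < dColor G c v β₁; omega) x
      have hvx' : G.Adj v x' := (G.mem_neighborFinset v x').mp (Finset.mem_filter.mp hx'mem).1
      have hcx' : c s(v, x') = c s(v, x) := by
        rw [hcx]; exact (Finset.mem_filter.mp hx'mem).2
      exact colorDeg_delete_eq G c hvx x' hvx' hx'ne hcx' hlt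
    · rw [show s(v, x) = s(x, v) from Sym2.eq_swap] at hlt
      have hcxy : c s(x, y) = c s(x, v) := by
        rw [show s(x, v) = s(v, x) from Sym2.eq_swap, hcx, h]
      exact colorDeg_delete_eq G c hvx.symm y hxy hvy.ne' hcxy hlt
  refine ⟨hvx, hvy, hxy, ?_, ?_, Ne.symm h3⟩
  · rw [hcx]; exact fun h => hcy h.symm
  · rw [hcx]; exact fun h => h2 h.symm
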